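/- The k-distance-to-measure d_k is stable under perturbations of the data in the Hausdorff metric: if X and Y are finite subsets of ℝ^d, each of cardinality n, whose Hausdorff distance satisfies d_H(X,Y) ≤ ε and which admit a bijection φ: X → Y with ‖x − φ(x)‖ ≤ ε for all x ∈ X, then the corresponding k-dtm functions satisfy |d_k^X(z) − d_k^Y(z)| ≤ ε for every z ∈ ℝ^d. -/

import Mathlib

open scoped BigOperators

/-- The `i`-th smallest distance from `z` to the points of the tuple `x`. -/
noncomputable def sortedDist {d n : ℕ} (x : Fin n → EuclideanSpace ℝ (Fin d))
    (z : EuclideanSpace ℝ (Fin d)) : Fin n → ℝ :=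
  fun i => dist z (x (Tuple.sort (fun j => dist z (x j)) i))

/-- The empirical `k`-distance-to-measure: root mean square of the `k` smallest
distances from `z` to the points of `x`. -/
noncomputable def dtm {d n : ℕ} (x : Fin n → EuclideanSpace ℝ (Fin d)) (k : ℕ)
    (z : EuclideanSpace ℝ (Fin d)) : ℝ :=
  Real.sqrt ((k : ℝ)⁻¹ * ∑ i : Fin n, if (i : ℕ) < k then sortedDist x z i ^ 2 else 0)

/-- One-sided stability of order statistics under a matched perturbation. -/
lemma sorted_close_aux {n : ℕ} (u v : Fin n → ℝ) (hu : Monotone u) (hv : Monotone v)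
    (σ : Equiv.Perm (Fin n)) (ε : ℝ) (h : ∀ i, |u i - v (σ i)| ≤ ε) :
    ∀ i, v i - u i ≤ ε := by
  intro i
  by_contra hcon
  push_neg at hcon
  have key : ∀ j ∈ Finset.Iic i, σ j ∈ Finset.Iio i := by
    intro j hj
    simp only [Finset.mem_Iic] at hj
    simp only [Finset.mem_Iio]
    by_contra hge
    push_neg at hge
    have h1 : v i ≤ v (σ j) := hv hge
    have h2 : v (σ j) ≤ u j + ε := by
      have := abs_le.mp (h j)
      linarith [this.1]
    have h3 : u j ≤ u i := hu hj
    linarith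
  have hcard := Finset.card_le_card_of_injOn σ key (fun a _ b _ hab => σ.injective hab)
  rw [Fin.card_Iic, Fin.card_Iio] at hcard
  omega

lemma sorted_close {n : ℕ} (u v : Fin n → ℝ) (hu : Monotone u) (hv : Monotone v)
    (σ : Equiv.Perm (Fin n)) (ε : ℝ) (h : ∀ i, |u i - v (σ i)| ≤ ε) :
    ∀ i, |u i - v i| ≤ ε := by
  intro i
  have h1 := sorted_close_aux u v hu hv σ ε h i
  have h2 := sorted_close_aux v u hv hu σ.symm ε (by
    intro j
    have := h (σ.symm j)
    rw [Equiv.apply_symm_apply] at this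
    rwa [abs_sub_comm]) i
  rw [abs_le]
  constructor <;> linarith

set_option maxHeartbeats 2000000 in
theorem dtm_hausdorff_stable {d n : ℕ} (x y : Fin n → EuclideanSpace ℝ (Fin d))
    (k : ℕ) (hk : 1 ≤ k) (hkn : k ≤ n) (ε : ℝ) (hε : 0 ≤ ε)
    (hHaus : Metric.hausdorffDist (Set.range x) (Set.range y) ≤ ε)
    (φ : Equiv.Perm (Fin n)) (hφ : ∀ i : Fin n, dist (x i) (y (φ i)) ≤ ε) :
    ∀ z : EuclideanSpace ℝ (Fin d), |dtm x k z - dtm y k z| ≤ ε := by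
  intro z
  set f : Fin n → ℝ := fun j => dist z (x j) with hf
  set g : Fin n → ℝ := fun j => dist z (y j) with hg
  have hsx : sortedDist x z = f ∘ Tuple.sort f := rfl
  have hsy : sortedDist y z = g ∘ Tuple.sort g := rfl
  have hmonx : Monotone (sortedDist x z) := by rw [hsx]; exact Tuple.monotone_sort f
  have hmony : Monotone (sortedDist y z) := by rw [hsy]; exact Tuple.monotone_sort g
  -- the matching permutation between sorted sequences
  set σ : Equiv.Perm (Fin n) := ((Tuple.sort f).trans φ).trans (Tuple.sort g).symm with hσ
  have hmatch : ∀ i, |sortedDist x z i - sortedDist y z (σ i)| ≤ ε := by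
    intro i
    have : sortedDist y z (σ i) = g (φ (Tuple.sort f i)) := by
      simp [hsy, hσ, Function.comp]
    rw [this, hsx]
    calc |f (Tuple.sort f i) - g (φ (Tuple.sort f i))|
        = |dist z (x (Tuple.sort f i)) - dist z (y (φ (Tuple.sort f i)))| := rfl
      _ ≤ dist (x (Tuple.sort f i)) (y (φ (Tuple.sort f i))) := by
          simpa [dist_comm] using
            abs_dist_sub_le (x (Tuple.sort f i)) (y (φ (Tuple.sort f i))) z
      _ ≤ ε := hφ _
  have hclose : ∀ i, |sortedDist x z i - sortedDist y z i| ≤ ε :=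
    sorted_close _ _ hmonx hmony σ ε hmatch
  -- express dtm via Euclidean norms
  set u : EuclideanSpace ℝ (Fin n) := WithLp.toLp 2 (fun i : Fin n => if (i : ℕ) < k then sortedDist x z i else 0)
  set v : EuclideanSpace ℝ (Fin n) := WithLp.toLp 2 (fun i : Fin n => if (i : ℕ) < k then sortedDist y z i else 0)
  have hnorm : ∀ (w : Fin n → ℝ) (s : EuclideanSpace ℝ (Fin n)),
      (∀ i, s i = if (i : ℕ) < k then w i else 0) →
      ‖s‖ = Real.sqrt (∑ i : Fin n, if (i : ℕ) < k then w i ^ 2 else 0) := by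
    intro w s hs
    rw [EuclideanSpace.norm_eq]
    congr 1
    apply Finset.sum_congr rfl
    intro i _
    rw [hs i]
    split_ifs <;> simp [sq_abs, sq]
  have hu : ‖u‖ = Real.sqrt (∑ i : Fin n, if (i : ℕ) < k then sortedDist x z i ^ 2 else 0) :=
    hnorm _ u (fun i => rfl)
  have hv : ‖v‖ = Real.sqrt (∑ i : Fin n, if (i : ℕ) < k then sortedDist y z i ^ 2 else 0) :=
    hnorm _ v (fun i => rfl)
  have hkpos : (0 : ℝ) < (k : ℝ) := by exact_mod_cast hk
  have hdtmx : dtm x k z = Real.sqrt ((k : ℝ)⁻¹) * ‖u‖ := by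
    rw [dtm, hu, ← Real.sqrt_mul (by positivity)]
  have hdtmy : dtm y k z = Real.sqrt ((k : ℝ)⁻¹) * ‖v‖ := by
    rw [dtm, hv, ← Real.sqrt_mul (by positivity)]
  -- bound ‖u - v‖
  have hdiff : ‖u - v‖ ≤ Real.sqrt ((k : ℝ) * ε ^ 2) := by
    rw [EuclideanSpace.norm_eq]
    apply Real.sqrt_le_sqrt
    have : ∀ i : Fin n, ‖(u - v) i‖ ^ 2 ≤ if (i : ℕ) < k then ε ^ 2 else 0 := by
      intro i
      have : (u - v) i = u i - v i := rfl
      rw [this]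
      show ‖(if (i : ℕ) < k then sortedDist x z i else 0) -
        (if (i : ℕ) < k then sortedDist y z i else 0)‖ ^ 2 ≤ _
      split_ifs with hik
      · rw [Real.norm_eq_abs, sq_abs]
        have := hclose i
        nlinarith [abs_nonneg (sortedDist x z i - sortedDist y z i),
          sq_abs (sortedDist x z i - sortedDist y z i)]
      · simp
    calc (∑ i : Fin n, ‖(u - v) i‖ ^ 2) ≤ ∑ i : Fin n, if (i : ℕ) < k then ε ^ 2 else 0 :=
          Finset.sum_le_sum (fun i _ => this i)
      _ = (k : ℝ) * ε ^ 2 := by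
          rw [Fin.sum_univ_eq_sum_range (fun i => if i < k then ε ^ 2 else 0)]
          rw [← Finset.sum_filter, Finset.range_eq_Ico, Finset.Ico_filter_lt,
            min_eq_right hkn, Finset.sum_const, Nat.card_Ico, nsmul_eq_mul]
          norm_num
  have htri : |‖u‖ - ‖v‖| ≤ ‖u - v‖ := abs_norm_sub_norm_le u v
  have hsq : Real.sqrt ((k : ℝ) * ε ^ 2) = Real.sqrt (k : ℝ) * ε := by
    rw [Real.sqrt_mul (le_of_lt hkpos), Real.sqrt_sq hε]
  have hprod : Real.sqrt ((k : ℝ)⁻¹) * Real.sqrt (k : ℝ) = 1 := by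
    rw [← Real.sqrt_mul (by positivity), inv_mul_cancel₀ (ne_of_gt hkpos), Real.sqrt_one]
  calc |dtm x k z - dtm y k z| = Real.sqrt ((k : ℝ)⁻¹) * |‖u‖ - ‖v‖| := by
        rw [hdtmx, hdtmy, ← mul_sub, abs_mul, abs_of_nonneg (Real.sqrt_nonneg _)]
    _ ≤ Real.sqrt ((k : ℝ)⁻¹) * (Real.sqrt (k : ℝ) * ε) := by
        apply mul_le_mul_of_nonneg_left _ (Real.sqrt_nonneg _)
        calc |‖u‖ - ‖v‖| ≤ ‖u - v‖ := htri
          _ ≤ Real.sqrt ((k : ℝ) * ε ^ 2) := hdiff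
          _ = Real.sqrt (k : ℝ) * ε := hsq
    _ = ε := by rw [← mul_assoc, hprod, one_mul]
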